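/- Let x = (μ, ν) and x' = (μ', ν') be bipartitions in BRP^{00}_n and BRP^{00}_{n'} respectively (with appropriate staircases), both viewed via the odd-root criterion for the Borel subalgebras of pe(n). Then for x, x' ∈ BRP^{00}_n, one has b(ζ_x) ⊊ b(ζ_{x'}) as subalgebras (equivalently, {odd roots α : (ζ_x, α) > 0} ⊊ {odd roots α : (ζ_{x'}, α) > 0}) if and only if μ' = (μ, 1) and ν = (ν', 1), i.e., μ' is obtained from μ by appending a part 1 and ν is obtained from ν' by appending a part 1. -/

import Mathlib

/-- The basis vector `ε_i` (1-indexed) of the weight lattice, as a function `ℕ → ℤ`. -/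
def eps (i : ℕ) : ℕ → ℤ := fun k => if k = i then 1 else 0

/-- The odd roots of `pe(n)`:
`{ε_i + ε_j : 1 ≤ i ≤ j ≤ n} ∪ {-ε_i - ε_j : 1 ≤ i < j ≤ n}`. -/
def OddRoots (n : ℕ) : Set (ℕ → ℤ) :=
  {α | ∃ i j, 1 ≤ i ∧ i ≤ j ∧ j ≤ n ∧ α = eps i + eps j} ∪
  {α | ∃ i j, 1 ≤ i ∧ i < j ∧ j ≤ n ∧ α = -eps i - eps j}

/-- The standard bilinear form `(ζ, α) = Σ_{k=1}^n ζ_k α_k`. -/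
def pairing (n : ℕ) (ζ α : ℕ → ℤ) : ℤ := ∑ k ∈ Finset.Icc 1 n, ζ k * α k

/-- The weight `ζ_x = Σ_i μ_i ε_i − Σ_j ν_j ε_{n+1−j}` attached to a bipartition
`x = (μ, ν)` with `ℓ(μ) = p` (partitions given as 1-indexed sequences of parts). -/
def zetaWt (n p : ℕ) (μ ν : ℕ → ℕ) : ℕ → ℤ :=
  fun k => if k ≤ p then (μ k : ℤ) else -(ν (n + 1 - k) : ℤ)

/-- The bipartition `(μ, ν)` with `ℓ(μ) = p`, `ℓ(ν) = q`, `p + q = n`, lies in `BRP⁰⁰ₙ`: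
its parts are exactly `n, n−1, …, 1`. -/
def IsBRP00 (n p q : ℕ) (μ ν : ℕ → ℕ) : Prop :=
  p + q = n ∧ (∀ i, 1 ≤ i → i ≤ p → 0 < μ i) ∧ (∀ i, p < i → μ i = 0) ∧
  (∀ i, 1 ≤ i → μ (i + 1) ≤ μ i) ∧
  (∀ j, 1 ≤ j → j ≤ q → 0 < ν j) ∧ (∀ j, q < j → ν j = 0) ∧
  (∀ j, 1 ≤ j → ν (j + 1) ≤ ν j) ∧
  ((Finset.Icc 1 p).val.map μ) + ((Finset.Icc 1 q).val.map ν) = (Finset.Icc 1 n).val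

/-! For `x ∈ BRP⁰⁰ₙ` the weight `ζ_x` is strictly decreasing and its absolute values are a
permutation of `1, …, n`. For such `ζ` and `i ≠ j` we have `ζ_i + ζ_j ≠ 0`, so exactly one of
`±(ε_i + ε_j)` is positive; hence `b(ζ) ⊆ b(ζ')` forces all signs of `ζ_i + ζ_j` (`i < j`) to
agree, and strictness can only come from a root `2ε_i`. These signs determine `ζ` up to the sign
of its entry of absolute value `1`: the number of `j ≠ k` with `ζ_j + ζ_k > 0` equals
`ζ_k + k - 2` if `ζ_k > 0` and `ζ_k + k` if `ζ_k < 0`. So `b(ζ) ⊊ b(ζ')` exactly when `ζ'` arises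
from `ζ` by turning the entry `-1` into `1`, which for `ζ_x` means moving the part `1` of `ν`
to the end of `μ`.
-/

open Finset

section Pairing

variable {n : ℕ} {ζ ζ' : ℕ → ℤ}

lemma pairing_add (α β : ℕ → ℤ) : pairing n ζ (α + β) = pairing n ζ α + pairing n ζ β := by
  simp only [pairing, Pi.add_apply, mul_add, sum_add_distrib]

lemma pairing_neg (α : ℕ → ℤ) : pairing n ζ (-α) = -pairing n ζ α := by
  simp only [pairing, Pi.neg_apply, mul_neg, sum_neg_distrib]

lemma pairing_eps {i : ℕ} (hi : i ∈ Icc 1 n) : pairing n ζ (eps i) = ζ i := by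
  simp [pairing, eps, hi]

/-- The odd roots that are positive for the Borel subalgebra `b(ζ)`. -/
def posRoots (n : ℕ) (ζ : ℕ → ℤ) : Set (ℕ → ℤ) := {α | α ∈ OddRoots n ∧ 0 < pairing n ζ α}

lemma eps_add_eps_mem_posRoots_iff {i j : ℕ} (hi : 1 ≤ i) (hij : i ≤ j) (hj : j ≤ n) :
    eps i + eps j ∈ posRoots n ζ ↔ 0 < ζ i + ζ j := by
  rw [posRoots, Set.mem_ofPred_eq, pairing_add, pairing_eps (by simp; omega),
    pairing_eps (by simp; omega)]
  exact and_iff_right (Or.inl ⟨i, j, hi, hij, hj, rfl⟩)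

lemma neg_eps_sub_eps_mem_posRoots_iff {i j : ℕ} (hi : 1 ≤ i) (hij : i < j) (hj : j ≤ n) :
    -eps i - eps j ∈ posRoots n ζ ↔ ζ i + ζ j < 0 := by
  rw [posRoots, Set.mem_ofPred_eq, sub_eq_add_neg, pairing_add, pairing_neg, pairing_neg,
    pairing_eps (by simp; omega), pairing_eps (by simp; omega)]
  exact (and_iff_right (Or.inr ⟨i, j, hi, hij, hj, sub_eq_add_neg _ _⟩)).trans (by omega)

lemma posRoots_subset_posRoots_iff :
    posRoots n ζ ⊆ posRoots n ζ' ↔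
      (∀ i j, 1 ≤ i → i ≤ j → j ≤ n → 0 < ζ i + ζ j → 0 < ζ' i + ζ' j) ∧
      (∀ i j, 1 ≤ i → i < j → j ≤ n → ζ i + ζ j < 0 → ζ' i + ζ' j < 0) := by
  constructor
  · intro h
    refine ⟨fun i j hi hij hj hpos => ?_, fun i j hi hij hj hneg => ?_⟩
    · simpa only [eps_add_eps_mem_posRoots_iff hi hij hj] using
        h ((eps_add_eps_mem_posRoots_iff hi hij hj).2 hpos)
    · simpa only [neg_eps_sub_eps_mem_posRoots_iff hi hij hj] using
        h ((neg_eps_sub_eps_mem_posRoots_iff hi hij hj).2 hneg)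
  · rintro ⟨hpos, hneg⟩ α hα
    obtain ⟨⟨i, j, hi, hij, hj, rfl⟩ | ⟨i, j, hi, hij, hj, rfl⟩, -⟩ := id hα
    · rw [eps_add_eps_mem_posRoots_iff hi hij hj] at hα ⊢
      exact hpos i j hi hij hj hα
    · rw [neg_eps_sub_eps_mem_posRoots_iff hi hij hj] at hα ⊢
      exact hneg i j hi hij hj hα

end Pairing

structure IsSignedStaircase (n : ℕ) (ζ : ℕ → ℤ) : Prop where
  strictAntiOn : StrictAntiOn ζ (Set.Icc 1 n)
  bijOn_natAbs : Set.BijOn (fun k => (ζ k).natAbs) (Set.Icc 1 n) (Set.Icc 1 n)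

def posPartnerCount (n : ℕ) (ζ : ℕ → ℤ) (k : ℕ) : ℕ := #{j ∈ Icc 1 n | j ≠ k ∧ 0 < ζ j + ζ k}

lemma posPartnerCount_congr {n k : ℕ} {ζ ζ' : ℕ → ℤ} (hk : k ∈ Icc 1 n)
    (h : ∀ i j, 1 ≤ i → i < j → j ≤ n → (0 < ζ i + ζ j ↔ 0 < ζ' i + ζ' j)) :
    posPartnerCount n ζ k = posPartnerCount n ζ' k := by
  refine congrArg card (filter_congr fun j hj => and_congr_right fun hjk => ?_)
  have hj := mem_Icc.1 hj
  have hk := mem_Icc.1 hk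
  rcases lt_or_gt_of_ne hjk with hlt | hlt
  · exact h j k hj.1 hlt hk.2
  · rw [add_comm, add_comm (ζ' j)]
    exact h k j hk.1 hlt hj.2

def IsNegOneFlip (n : ℕ) (ζ ζ' : ℕ → ℤ) : Prop :=
  ∃ i ∈ Icc 1 n, ζ i = -1 ∧ ζ' i = 1 ∧ ∀ k ∈ Icc 1 n, k ≠ i → ζ' k = ζ k

namespace IsSignedStaircase

variable {n : ℕ} {ζ ζ' : ℕ → ℤ} {i j k : ℕ}

lemma natAbs_injOn (hζ : IsSignedStaircase n ζ) (hi : i ∈ Icc 1 n) (hj : j ∈ Icc 1 n)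
    (h : (ζ i).natAbs = (ζ j).natAbs) : i = j :=
  hζ.bijOn_natAbs.injOn (by simpa using hi) (by simpa using hj) h

lemma natAbs_mem (hζ : IsSignedStaircase n ζ) (hk : k ∈ Icc 1 n) : (ζ k).natAbs ∈ Icc 1 n := by
  simpa using hζ.bijOn_natAbs.mapsTo (by simpa using hk)

lemma add_ne_zero (hζ : IsSignedStaircase n ζ) (hi : i ∈ Icc 1 n) (hj : j ∈ Icc 1 n)
    (hij : i ≠ j) : ζ i + ζ j ≠ 0 := by
  have := mem_Icc.1 (hζ.natAbs_mem hi)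
  intro h
  exact hij (hζ.natAbs_injOn hi hj (by omega))

lemma lt_iff_lt (hζ : IsSignedStaircase n ζ) (hi : i ∈ Icc 1 n) (hj : j ∈ Icc 1 n) :
    ζ i < ζ j ↔ j < i :=
  hζ.strictAntiOn.lt_iff_gt (by simpa using hi) (by simpa using hj)

lemma card_filter_natAbs_lt (hζ : IsSignedStaircase n ζ) {a : ℕ} (ha : a ≤ n + 1) :
    #{j ∈ Icc 1 n | (ζ j).natAbs < a} = a - 1 := by
  rw [← Nat.card_Ico 1 a]
  refine card_nbij (fun j => (ζ j).natAbs) (fun j hj => ?_) ?_ (fun m hm => ?_)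
  · simp only [coe_filter, Set.mem_ofPred_eq, coe_Ico, Set.mem_Ico] at hj ⊢
    exact ⟨(mem_Icc.1 (hζ.natAbs_mem hj.1)).1, hj.2⟩
  · exact hζ.bijOn_natAbs.injOn.mono (by intro j; simp +contextual)
  · simp only [coe_Ico, Set.mem_Ico] at hm
    obtain ⟨j, hj, rfl⟩ := hζ.bijOn_natAbs.surjOn (show m ∈ Set.Icc 1 n by simp; omega)
    exact ⟨j, by simpa [hm.2] using hj, rfl⟩

lemma posPartnerCount_of_pos (hζ : IsSignedStaircase n ζ) (hk : k ∈ Icc 1 n) (hpos : 0 < ζ k) :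
    (posPartnerCount n ζ k : ℤ) + 2 = ζ k + k := by
  have hk' := mem_Icc.1 hk
  have habs_k := mem_Icc.1 (hζ.natAbs_mem hk)
  have hdisj : Disjoint {j ∈ Icc 1 n | (ζ j).natAbs < (ζ k).natAbs} (Ico 1 k) := by
    refine disjoint_left.2 fun j hj hj' => ?_
    rw [mem_filter] at hj
    have := (hζ.lt_iff_lt hk hj.1).2 (mem_Ico.1 hj').2
    omega
  have hsplit : {j ∈ Icc 1 n | j ≠ k ∧ 0 < ζ j + ζ k} =
      {j ∈ Icc 1 n | (ζ j).natAbs < (ζ k).natAbs} ∪ Ico 1 k := by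
    ext j
    simp only [mem_union, mem_filter, mem_Ico]
    constructor
    · rintro ⟨hj, hjk, hsum⟩
      rcases lt_or_gt_of_ne hjk with h | h
      · exact Or.inr ⟨(mem_Icc.1 hj).1, h⟩
      · have := (hζ.lt_iff_lt hj hk).2 h
        exact Or.inl ⟨hj, by omega⟩
    · rintro (⟨hj, habs⟩ | ⟨h1, h2⟩)
      · exact ⟨hj, by rintro rfl; omega, by omega⟩
      · have hj : j ∈ Icc 1 n := mem_Icc.2 ⟨h1, by omega⟩
        have := (hζ.lt_iff_lt hk hj).2 h2
        exact ⟨hj, by omega, by omega⟩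
  rw [posPartnerCount, hsplit, card_union_of_disjoint hdisj,
    hζ.card_filter_natAbs_lt (by omega), Nat.card_Ico]
  omega

lemma posPartnerCount_of_neg (hζ : IsSignedStaircase n ζ) (hk : k ∈ Icc 1 n) (hneg : ζ k < 0) :
    (posPartnerCount n ζ k : ℤ) = ζ k + k := by
  have hk' := mem_Icc.1 hk
  have habs_k := mem_Icc.1 (hζ.natAbs_mem hk)
  have hdisj : Disjoint {j ∈ Icc 1 n | j ≠ k ∧ 0 < ζ j + ζ k}
      {j ∈ Icc 1 n | (ζ j).natAbs < (ζ k).natAbs} := by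
    refine disjoint_left.2 fun j hj hj' => ?_
    rw [mem_filter] at hj hj'
    omega
  have hsplit : {j ∈ Icc 1 n | j ≠ k ∧ 0 < ζ j + ζ k} ∪
      {j ∈ Icc 1 n | (ζ j).natAbs < (ζ k).natAbs} = Ico 1 k := by
    ext j
    simp only [mem_union, mem_filter, mem_Ico]
    constructor
    · rintro (⟨hj, -, hsum⟩ | ⟨hj, habs⟩)
      · exact ⟨(mem_Icc.1 hj).1, (hζ.lt_iff_lt hk hj).1 (by omega)⟩
      · exact ⟨(mem_Icc.1 hj).1, (hζ.lt_iff_lt hk hj).1 (by omega)⟩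
    · rintro ⟨h1, h2⟩
      have hj : j ∈ Icc 1 n := mem_Icc.2 ⟨h1, by omega⟩
      have hlt := (hζ.lt_iff_lt hk hj).2 h2
      have hne : (ζ j).natAbs ≠ (ζ k).natAbs := fun h => by
        have := hζ.natAbs_injOn hj hk h; omega
      by_cases habs : (ζ j).natAbs < (ζ k).natAbs
      · exact Or.inr ⟨hj, habs⟩
      · exact Or.inl ⟨hj, by omega, by omega⟩
  have hcard := congrArg card hsplit
  rw [card_union_of_disjoint hdisj, hζ.card_filter_natAbs_lt (by omega), Nat.card_Ico] at hcard
  rw [posPartnerCount]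
  omega

lemma eq_or_eq_neg_of_posPartnerCount_eq (hζ : IsSignedStaircase n ζ)
    (hζ' : IsSignedStaircase n ζ') (hk : k ∈ Icc 1 n)
    (h : posPartnerCount n ζ k = posPartnerCount n ζ' k) :
    ζ' k = ζ k ∨ (ζ' k = -ζ k ∧ (ζ k).natAbs = 1) := by
  have := mem_Icc.1 (hζ.natAbs_mem hk)
  have := mem_Icc.1 (hζ'.natAbs_mem hk)
  rcases lt_or_gt_of_ne (show ζ k ≠ 0 by omega) with hζk | hζk <;>
  rcases lt_or_gt_of_ne (show ζ' k ≠ 0 by omega) with hζ'k | hζ'k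
  · have := hζ.posPartnerCount_of_neg hk hζk
    have := hζ'.posPartnerCount_of_neg hk hζ'k
    omega
  · have := hζ.posPartnerCount_of_neg hk hζk
    have := hζ'.posPartnerCount_of_pos hk hζ'k
    omega
  · have := hζ.posPartnerCount_of_pos hk hζk
    have := hζ'.posPartnerCount_of_neg hk hζ'k
    omega
  · have := hζ.posPartnerCount_of_pos hk hζk
    have := hζ'.posPartnerCount_of_pos hk hζ'k
    omega

lemma add_pos_iff_of_posRoots_subset (hζ : IsSignedStaircase n ζ)
    (h : posRoots n ζ ⊆ posRoots n ζ') (hi : 1 ≤ i) (hij : i < j) (hj : j ≤ n) :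
    0 < ζ i + ζ j ↔ 0 < ζ' i + ζ' j := by
  obtain ⟨hpos, hneg⟩ := posRoots_subset_posRoots_iff.1 h
  refine ⟨hpos i j hi hij.le hj, fun h' => ?_⟩
  have := hζ.add_ne_zero (mem_Icc.2 ⟨hi, by omega⟩) (mem_Icc.2 ⟨by omega, hj⟩) hij.ne
  by_contra h
  have := hneg i j hi hij hj (by omega)
  omega

lemma isNegOneFlip_of_posRoots_ssubset (hζ : IsSignedStaircase n ζ)
    (hζ' : IsSignedStaircase n ζ') (hss : posRoots n ζ ⊂ posRoots n ζ') :
    IsNegOneFlip n ζ ζ' := by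
  have hpattern : ∀ i j, 1 ≤ i → i < j → j ≤ n → (0 < ζ i + ζ j ↔ 0 < ζ' i + ζ' j) :=
    fun _ _ => hζ.add_pos_iff_of_posRoots_subset hss.subset
  obtain ⟨i, hi, hζi, hζ'i⟩ : ∃ i ∈ Icc 1 n, ζ i ≤ 0 ∧ 0 < ζ' i := by
    by_contra! hdiag
    refine hss.not_subset (posRoots_subset_posRoots_iff.2
      ⟨fun a b ha hab hb hsum => ?_, fun a b ha hab hb hsum => ?_⟩)
    · rcases hab.eq_or_lt with rfl | hab
      · have := hdiag a (mem_Icc.2 ⟨ha, hb⟩)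
        omega
      · exact (hpattern a b ha hab hb).2 hsum
    · have := hζ.add_ne_zero (mem_Icc.2 ⟨ha, by omega⟩) (mem_Icc.2 ⟨by omega, hb⟩) hab.ne
      by_contra h
      have := (hpattern a b ha hab hb).1 (by omega)
      omega
  have hflip : ∀ k ∈ Icc 1 n, ζ' k = ζ k ∨ (ζ' k = -ζ k ∧ (ζ k).natAbs = 1) := fun k hk =>
    hζ.eq_or_eq_neg_of_posPartnerCount_eq hζ' hk (posPartnerCount_congr hk hpattern)
  have hζi' : ζ i = -1 ∧ ζ' i = 1 := by
    rcases hflip i hi with h | h <;> omega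
  refine ⟨i, hi, hζi'.1, hζi'.2, fun k hk hki => ?_⟩
  refine (hflip k hk).resolve_right fun h => hki (hζ.natAbs_injOn hk hi ?_)
  omega

lemma posRoots_ssubset_of_isNegOneFlip (hζ : IsSignedStaircase n ζ)
    (hflip : IsNegOneFlip n ζ ζ') : posRoots n ζ ⊂ posRoots n ζ' := by
  obtain ⟨i, hi, hζi, hζ'i, hrest⟩ := hflip
  have hbig : ∀ k ∈ Icc 1 n, k ≠ i → 2 ≤ (ζ k).natAbs := fun k hk hki => by
    have := mem_Icc.1 (hζ.natAbs_mem hk)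
    have : (ζ k).natAbs ≠ (ζ i).natAbs := fun h => hki (hζ.natAbs_injOn hk hi h)
    omega
  have hle : ∀ k ∈ Icc 1 n, ζ k ≤ ζ' k := fun k hk => by
    by_cases hki : k = i
    · subst hki; omega
    · exact (hrest k hk hki).ge
  have hsub : posRoots n ζ ⊆ posRoots n ζ' := by
    refine posRoots_subset_posRoots_iff.2 ⟨fun a b ha hab hb hsum => ?_,
      fun a b ha hab hb hsum => ?_⟩
    · have := hle a (mem_Icc.2 ⟨ha, by omega⟩)
      have := hle b (mem_Icc.2 ⟨by omega, hb⟩)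
      omega
    · have ha' : a ∈ Icc 1 n := mem_Icc.2 ⟨ha, by omega⟩
      have hb' : b ∈ Icc 1 n := mem_Icc.2 ⟨by omega, hb⟩
      by_cases hai : a = i
      · subst hai
        have := hrest b hb' (by omega)
        have := hbig b hb' (by omega)
        omega
      by_cases hbi : b = i
      · subst hbi
        have := hrest a ha' hai
        have := hbig a ha' hai
        omega
      rw [hrest a ha' hai, hrest b hb' hbi]
      exact hsum
  have hin := mem_Icc.1 hi
  refine (Set.ssubset_iff_of_subset hsub).2 ⟨eps i + eps i, ?_, ?_⟩
  · rw [eps_add_eps_mem_posRoots_iff hin.1 le_rfl hin.2]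
    omega
  · rw [eps_add_eps_mem_posRoots_iff hin.1 le_rfl hin.2]
    omega

theorem posRoots_ssubset_iff (hζ : IsSignedStaircase n ζ) (hζ' : IsSignedStaircase n ζ') :
    posRoots n ζ ⊂ posRoots n ζ' ↔ IsNegOneFlip n ζ ζ' :=
  ⟨hζ.isNegOneFlip_of_posRoots_ssubset hζ', hζ.posRoots_ssubset_of_isNegOneFlip⟩

end IsSignedStaircase

section Bipartitions

variable {n p q : ℕ} {μ ν : ℕ → ℕ} {k : ℕ}

lemma zetaWt_of_le (hk : k ≤ p) : zetaWt n p μ ν k = μ k := if_pos hk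

lemma zetaWt_of_lt (hk : p < k) : zetaWt n p μ ν k = -(ν (n + 1 - k) : ℤ) := if_neg (by omega)

lemma IsBRP00.isSignedStaircase (h : IsBRP00 n p q μ ν) :
    IsSignedStaircase n (zetaWt n p μ ν) := by
  obtain ⟨hpq, -, -, hμanti, -, -, hνanti, hparts⟩ := h
  have hparts_mem : ∀ m, m ∈ Icc 1 n ↔
      (∃ i ∈ Icc 1 p, μ i = m) ∨ (∃ j ∈ Icc 1 q, ν j = m) := by
    intro m
    rw [← mem_val, ← hparts, Multiset.mem_add, Multiset.mem_map, Multiset.mem_map]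
    rfl
  have hmaps : Set.MapsTo (fun k => (zetaWt n p μ ν k).natAbs) (Icc 1 n) (Icc 1 n) := by
    intro k hk
    have hk := mem_Icc.1 hk
    rw [mem_coe, hparts_mem]
    by_cases hkp : k ≤ p
    · exact Or.inl ⟨k, mem_Icc.2 ⟨hk.1, hkp⟩, by simp [zetaWt_of_le hkp]⟩
    · exact Or.inr ⟨n + 1 - k, mem_Icc.2 ⟨by omega, by omega⟩,
        by simp [zetaWt_of_lt (not_le.1 hkp)]⟩
  have hsurj : Set.SurjOn (fun k => (zetaWt n p μ ν k).natAbs) (Icc 1 n) (Icc 1 n) := by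
    intro m hm
    rcases (hparts_mem m).1 hm with ⟨i, hi, rfl⟩ | ⟨j, hj, rfl⟩
    · have hi := mem_Icc.1 hi
      exact ⟨i, mem_Icc.2 ⟨hi.1, by omega⟩, by simp [zetaWt_of_le hi.2]⟩
    · have hj := mem_Icc.1 hj
      refine ⟨n + 1 - j, mem_Icc.2 ⟨by omega, by omega⟩, ?_⟩
      simp [zetaWt_of_lt (show p < n + 1 - j by omega), show n + 1 - (n + 1 - j) = j by omega]
  have hinj := injOn_of_surjOn_of_card_le _ hmaps hsurj le_rfl
  have hanti : AntitoneOn (zetaWt n p μ ν) (Set.Icc 1 n) := by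
    have hμ := antitoneOn_nat_Ici_of_succ_le hμanti
    have hν := antitoneOn_nat_Ici_of_succ_le hνanti
    intro i hi j hj hij
    simp only [Set.mem_Icc] at hi hj
    by_cases hjp : j ≤ p
    · rw [zetaWt_of_le hjp, zetaWt_of_le (hij.trans hjp)]
      exact_mod_cast hμ hi.1 hj.1 hij
    rw [zetaWt_of_lt (not_le.1 hjp)]
    by_cases hip : i ≤ p
    · rw [zetaWt_of_le hip]
      omega
    rw [zetaWt_of_lt (not_le.1 hip)]
    have := hν (show 1 ≤ n + 1 - j by omega) (show 1 ≤ n + 1 - i by omega)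
      (show n + 1 - j ≤ n + 1 - i by omega)
    omega
  rw [coe_Icc] at hmaps hsurj hinj
  exact ⟨hanti.strictAntiOn_of_injOn (Set.InjOn.of_comp (g := Int.natAbs) hinj),
    ⟨hmaps, hinj, hsurj⟩⟩

variable {p' q' : ℕ} {μ' ν' : ℕ → ℕ}

lemma IsNegOneFlip.zetaWt_parts (hpq : p + q = n) (hpq' : p' + q' = n)
    (hμ' : ∀ i, 1 ≤ i → i ≤ p' → 0 < μ' i)
    (hflip : IsNegOneFlip n (zetaWt n p μ ν) (zetaWt n p' μ' ν')) :
    p' = p + 1 ∧ (∀ i, 1 ≤ i → i ≤ p → μ' i = μ i) ∧ μ' p' = 1 ∧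
      (∀ j, 1 ≤ j → j ≤ q' → ν j = ν' j) ∧ ν q = 1 := by
  obtain ⟨i, hi, hζi, hζ'i, hrest⟩ := hflip
  have hin := mem_Icc.1 hi
  have hpi : p < i := by
    by_contra h
    rw [zetaWt_of_le (not_lt.1 h)] at hζi
    omega
  have hip' : i ≤ p' := by
    by_contra h
    rw [zetaWt_of_lt (not_le.1 h)] at hζ'i
    omega
  -- every position in `(p, p']` has `ζ ≤ 0 < ζ'`, so it is the flipped one
  have hbetween : ∀ k, p < k → k ≤ p' → k = i := by
    intro k hpk hkp'
    by_contra hki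
    have := hrest k (mem_Icc.2 ⟨by omega, by omega⟩) hki
    rw [zetaWt_of_le hkp', zetaWt_of_lt hpk] at this
    have := hμ' k (by omega) hkp'
    omega
  have hp'i := hbetween p' (by omega) le_rfl
  have hp1i := hbetween (p + 1) (by omega) (by omega)
  refine ⟨by omega, fun j hj hjp => ?_, ?_, fun j hj hjq' => ?_, ?_⟩
  · have := hrest j (mem_Icc.2 ⟨hj, by omega⟩) (by omega)
    rw [zetaWt_of_le hjp, zetaWt_of_le (by omega)] at this
    omega
  · rw [zetaWt_of_le hip', ← hp'i] at hζ'i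
    omega
  · have := hrest (n + 1 - j) (mem_Icc.2 ⟨by omega, by omega⟩) (by omega)
    rw [zetaWt_of_lt (by omega), zetaWt_of_lt (by omega),
      show n + 1 - (n + 1 - j) = j by omega] at this
    omega
  · rw [zetaWt_of_lt hpi, show n + 1 - i = q by omega] at hζi
    omega

lemma isNegOneFlip_zetaWt_of_parts (hpq : p + q = n) (hpq' : p' + q' = n) (hp' : p' = p + 1)
    (hμ : ∀ i, 1 ≤ i → i ≤ p → μ' i = μ i) (hμ'p' : μ' p' = 1)
    (hν : ∀ j, 1 ≤ j → j ≤ q' → ν j = ν' j) (hνq : ν q = 1) :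
    IsNegOneFlip n (zetaWt n p μ ν) (zetaWt n p' μ' ν') := by
  refine ⟨p + 1, mem_Icc.2 ⟨by omega, by omega⟩, ?_, ?_, fun k hk hkp => ?_⟩
  · rw [zetaWt_of_lt (by omega), show n + 1 - (p + 1) = q by omega, hνq]
    rfl
  · rw [zetaWt_of_le (by omega), ← hp', hμ'p']
    rfl
  have hk := mem_Icc.1 hk
  rcases lt_or_gt_of_ne hkp with h | h
  · rw [zetaWt_of_le (by omega), zetaWt_of_le (by omega), hμ k hk.1 (by omega)]
  · rw [zetaWt_of_lt (by omega), zetaWt_of_lt (by omega), hν (n + 1 - k) (by omega) (by omega)]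

end Bipartitions

/-- For `x = (μ, ν)` and `x' = (μ', ν')` in `BRP⁰⁰ₙ`, the Borel subalgebra `b(ζ_x)` is
strictly contained in `b(ζ_{x'})` — equivalently, the set of odd roots pairing positively
with `ζ_x` is strictly contained in the one for `ζ_{x'}` — if and only if
`μ' = (μ, 1)` and `ν = (ν', 1)`. -/
theorem stmt11 (n p q p' q' : ℕ) (μ ν μ' ν' : ℕ → ℕ)
    (hx : IsBRP00 n p q μ ν) (hx' : IsBRP00 n p' q' μ' ν') :
    {α | α ∈ OddRoots n ∧ 0 < pairing n (zetaWt n p μ ν) α} ⊂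
      {α | α ∈ OddRoots n ∧ 0 < pairing n (zetaWt n p' μ' ν') α} ↔
    (p' = p + 1 ∧ (∀ i, 1 ≤ i → i ≤ p → μ' i = μ i) ∧ μ' p' = 1 ∧
      (∀ j, 1 ≤ j → j ≤ q' → ν j = ν' j) ∧ ν q = 1) :=
  (hx.isSignedStaircase.posRoots_ssubset_iff hx'.isSignedStaircase).trans
    ⟨IsNegOneFlip.zetaWt_parts hx.1 hx'.1 hx'.2.1, fun ⟨hp', hμ, hμ'p', hν, hνq⟩ =>
      isNegOneFlip_zetaWt_of_parts hx.1 hx'.1 hp' hμ hμ'p' hν hνq⟩
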